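/- arXiv:1705.10741 — 3 statements merged into one kernel-verified Lean document; each statement's English description precedes it below -/
import Mathlib

section
/- Let H : ℝ^N → ℝ be convex, differentiable, satisfying C_H|p|^γ − K ≤ H(p) ≤ C_H|p|^γ and ∇H(p)·p − H(p) ≥ K^{-1}|p|^γ − K for all p. Then there exists C₂ > 0 (depending on C_H, γ, K) such that C₂|p|^{γ−1} − C₂^{-1} ≤ |∇H(p)| ≤ C₂^{-1}(|p|^{γ−1}+1) for all p ∈ ℝ^N. -/
/-!
Convexity gives `⟪∇H p, v⟫ ≤ H (p + v) - H p`. Taking `v` along `∇H p` with `‖v‖ = ‖p‖ + 1` and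
using `-K ≤ H ≤ C_H ‖·‖^γ` bounds `(‖p‖ + 1) ‖∇H p‖` by `C_H (2 (‖p‖ + 1))^γ + K`, which is the
upper bound. For the lower bound, coercivity and Cauchy–Schwarz give
`‖∇H p‖ ‖p‖ ≥ K⁻¹ ‖p‖^γ - 2K`; divide by `‖p‖` when `‖p‖ ≥ 1`, while for `‖p‖ ≤ 1` the claimed
lower bound is not positive once the additive constant is at least `K⁻¹ + 2K`.
-/

open Set InnerProductSpace

theorem ConvexOn.fderiv_apply_le_sub {E : Type*} [NormedAddCommGroup E] [NormedSpace ℝ E]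
    {f : E → ℝ} (hf : ConvexOn ℝ univ f) {p : E} (hp : DifferentiableAt ℝ f p) (v : E) :
    fderiv ℝ f p v ≤ f (p + v) - f p := by
  set ℓ := AffineMap.lineMap (k := ℝ) p (p + v)
  have hline : ConvexOn ℝ univ (f ∘ ℓ) := hf.comp_affineMap ℓ
  have hderiv : HasDerivAt (f ∘ ℓ) (fderiv ℝ f p v) 0 := by
    have hp' : HasFDerivAt f (fderiv ℝ f p) (ℓ 0) := by
      simpa [ℓ] using hp.hasFDerivAt
    simpa using hp'.comp_hasDerivAt (0 : ℝ) AffineMap.hasDerivAt_lineMap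
  simpa [slope_def_field, ℓ] using
    hline.le_slope_of_hasDerivAt (mem_univ 0) (mem_univ 1) one_pos hderiv

theorem ConvexOn.mul_norm_gradient_le {E : Type*} [NormedAddCommGroup E] [InnerProductSpace ℝ E]
    [CompleteSpace E] {f : E → ℝ} (hf : ConvexOn ℝ univ f) {p : E} (hp : DifferentiableAt ℝ f p)
    {r M : ℝ} (hr : 0 ≤ r) (hM : ∀ v, ‖v‖ ≤ r → f (p + v) - f p ≤ M) :
    r * ‖gradient f p‖ ≤ M := by
  set g := gradient f p with hg
  rcases eq_or_ne g 0 with hg0 | hg0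
  · simpa [hg0] using hM 0 (by simpa using hr)
  have hgpos : 0 < ‖g‖ := norm_pos_iff.2 hg0
  have hnorm : ‖(r / ‖g‖) • g‖ = r := by
    rw [norm_smul, Real.norm_of_nonneg (by positivity), div_mul_cancel₀ _ hgpos.ne']
  calc r * ‖g‖ = inner ℝ g ((r / ‖g‖) • g) := by
        rw [real_inner_smul_right, real_inner_self_eq_norm_sq]; field_simp
    _ = fderiv ℝ f p ((r / ‖g‖) • g) := by rw [hg, gradient, toDual_symm_apply]
    _ ≤ f (p + (r / ‖g‖) • g) - f p := hf.fderiv_apply_le_sub hp _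
    _ ≤ M := hM _ hnorm.le

theorem Real.add_one_rpow_le {x s : ℝ} (hx : 0 ≤ x) (hs : 0 ≤ s) :
    (x + 1) ^ s ≤ 2 ^ s * (x ^ s + 1) := by
  have hxs : 0 ≤ x ^ s := Real.rpow_nonneg hx s
  rcases le_total x 1 with hx1 | hx1
  · calc (x + 1) ^ s ≤ 2 ^ s := Real.rpow_le_rpow (by linarith) (by linarith) hs
      _ ≤ 2 ^ s * (x ^ s + 1) := le_mul_of_one_le_right (by positivity) (by linarith)
  · calc (x + 1) ^ s ≤ (2 * x) ^ s := Real.rpow_le_rpow (by linarith) (by linarith) hs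
      _ = 2 ^ s * x ^ s := Real.mul_rpow zero_le_two hx
      _ ≤ 2 ^ s * (x ^ s + 1) := by gcongr; linarith

theorem Real.mul_rpow_sub_one_sub_le {x y a b γ : ℝ} (hx : 0 ≤ x) (hy : 0 ≤ y) (ha : 0 ≤ a)
    (hb : 0 ≤ b) (hγ : 1 ≤ γ) (h : a * x ^ γ - b ≤ y * x) :
    a * x ^ (γ - 1) - (a + b) ≤ y := by
  rcases le_total x 1 with hx1 | hx1
  · have : x ^ (γ - 1) ≤ 1 := Real.rpow_le_one hx hx1 (by linarith)
    nlinarith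
  · have hx0 : 0 < x := by linarith
    have hsplit : x ^ γ = x ^ (γ - 1) * x := by
      rw [Real.rpow_sub_one hx0.ne', div_mul_cancel₀ _ hx0.ne']
    have : (a * x ^ (γ - 1) - b) * x ≤ y * x := by nlinarith
    linarith [le_of_mul_le_mul_right this hx0]

theorem ConvexOn.norm_gradient_le_of_rpow_bounds {E : Type*} [NormedAddCommGroup E]
    [InnerProductSpace ℝ E] [CompleteSpace E] {f : E → ℝ} (hf : ConvexOn ℝ univ f)
    (hdiff : Differentiable ℝ f) {γ C K : ℝ} (hγ : 1 ≤ γ) (hC : 0 ≤ C)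
    (hup : ∀ p, f p ≤ C * ‖p‖ ^ γ) (hlow : ∀ p, -K ≤ f p) (p : E) :
    ‖gradient f p‖ ≤ (2 ^ γ * 2 ^ (γ - 1) * C + K) * (‖p‖ ^ (γ - 1) + 1) := by
  set x := ‖p‖
  have hx : 0 ≤ x := norm_nonneg p
  have hK : 0 ≤ K := by
    simpa [Real.zero_rpow (by linarith : γ ≠ 0)] using (hlow 0).trans (hup 0)
  have hstep : (x + 1) * ‖gradient f p‖ ≤ C * (2 * (x + 1)) ^ γ + K := by
    refine hf.mul_norm_gradient_le (hdiff p) (by positivity) fun v hv => ?_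
    have : ‖p + v‖ ≤ 2 * (x + 1) := (norm_add_le _ _).trans (by linarith)
    calc f (p + v) - f p ≤ C * ‖p + v‖ ^ γ + K := by linarith [hup (p + v), hlow p]
      _ ≤ C * (2 * (x + 1)) ^ γ + K := by gcongr
  have hx1 : 0 < x + 1 := by linarith
  have hdiv : ‖gradient f p‖ ≤ 2 ^ γ * C * (x + 1) ^ (γ - 1) + K := by
    have hsplit : C * (2 * (x + 1)) ^ γ = (x + 1) * (2 ^ γ * C * (x + 1) ^ (γ - 1)) := by
      rw [Real.mul_rpow zero_le_two hx1.le, Real.rpow_sub_one hx1.ne']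
      field_simp
    refine le_of_mul_le_mul_left ?_ hx1
    nlinarith
  have hxs : 0 ≤ x ^ (γ - 1) := Real.rpow_nonneg hx _
  calc ‖gradient f p‖ ≤ 2 ^ γ * C * (x + 1) ^ (γ - 1) + K := hdiv
    _ ≤ 2 ^ γ * C * (2 ^ (γ - 1) * (x ^ (γ - 1) + 1)) + K * (x ^ (γ - 1) + 1) := by
      gcongr
      · exact Real.add_one_rpow_le hx (by linarith)
      · exact le_mul_of_one_le_right hK (by linarith)
    _ = (2 ^ γ * 2 ^ (γ - 1) * C + K) * (x ^ (γ - 1) + 1) := by ring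

theorem gradient_growth_of_convex_hamiltonian_general
    {N : ℕ} (γ C_H K : ℝ) (hγ : 1 < γ) (hCH : 0 < C_H) (hK : 0 < K)
    (H : EuclideanSpace ℝ (Fin N) → ℝ)
    (hconv : ConvexOn ℝ Set.univ H)
    (hdiff : Differentiable ℝ H)
    (hH : ∀ p, C_H * ‖p‖ ^ γ - K ≤ H p ∧ H p ≤ C_H * ‖p‖ ^ γ)
    (hco : ∀ p : EuclideanSpace ℝ (Fin N),
      (inner ℝ (gradient H p) p : ℝ) - H p ≥ K⁻¹ * ‖p‖ ^ γ - K) :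
    ∃ C₂ > 0, ∀ p : EuclideanSpace ℝ (Fin N),
      C₂ * ‖p‖ ^ (γ - 1) - C₂⁻¹ ≤ ‖gradient H p‖ ∧
      ‖gradient H p‖ ≤ C₂⁻¹ * (‖p‖ ^ (γ - 1) + 1) := by
  have hHnonneg (p : EuclideanSpace ℝ (Fin N)) : 0 ≤ C_H * ‖p‖ ^ γ := by positivity
  set M := max (K⁻¹ + 2 * K) (2 ^ γ * 2 ^ (γ - 1) * C_H + K)
  have hKM : K ≤ M := le_max_of_le_left (by linarith [inv_pos.2 hK])
  refine ⟨M⁻¹, inv_pos.2 (hK.trans_le hKM), fun p => ?_⟩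
  rw [inv_inv]
  constructor
  · have hinner : K⁻¹ * ‖p‖ ^ γ - 2 * K ≤ ‖gradient H p‖ * ‖p‖ := by
      linarith [hco p, (hH p).1, hHnonneg p, real_inner_le_norm (gradient H p) p]
    calc M⁻¹ * ‖p‖ ^ (γ - 1) - M ≤ K⁻¹ * ‖p‖ ^ (γ - 1) - (K⁻¹ + 2 * K) := by
          gcongr
          exact le_max_left _ _
      _ ≤ ‖gradient H p‖ :=
          Real.mul_rpow_sub_one_sub_le (norm_nonneg p) (norm_nonneg _) (inv_nonneg.2 hK.le)
            (by positivity) hγ.le hinner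
  · calc ‖gradient H p‖ ≤ (2 ^ γ * 2 ^ (γ - 1) * C_H + K) * (‖p‖ ^ (γ - 1) + 1) :=
          hconv.norm_gradient_le_of_rpow_bounds hdiff hγ.le hCH.le (fun p => (hH p).2)
            (fun p => by linarith [(hH p).1, hHnonneg p]) p
      _ ≤ M * (‖p‖ ^ (γ - 1) + 1) := by
          gcongr
          exact le_max_right _ _

theorem gradient_growth_of_convex_hamiltonian
    {N : ℕ} (hN : 1 ≤ N) (γ C_H K : ℝ) (hγ : 1 < γ) (hCH : 0 < C_H) (hK : 0 < K)
    (H : EuclideanSpace ℝ (Fin N) → ℝ)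
    (hconv : ConvexOn ℝ Set.univ H)
    (hdiff : Differentiable ℝ H)
    (hH : ∀ p, C_H * ‖p‖ ^ γ - K ≤ H p ∧ H p ≤ C_H * ‖p‖ ^ γ)
    (hco : ∀ p : EuclideanSpace ℝ (Fin N),
      (inner ℝ (gradient H p) p : ℝ) - H p ≥ K⁻¹ * ‖p‖ ^ γ - K) :
    ∃ C₂ > 0, ∀ p : EuclideanSpace ℝ (Fin N),
      C₂ * ‖p‖ ^ (γ - 1) - C₂⁻¹ ≤ ‖gradient H p‖ ∧
      ‖gradient H p‖ ≤ C₂⁻¹ * (‖p‖ ^ (γ - 1) + 1) :=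
  gradient_growth_of_convex_hamiltonian_general γ C_H K hγ hCH hK H hconv hdiff hH hco
end

section
/- Let F : [0,∞) → ℝ with F(m) = ∫_0^m f(n) dn where f satisfies −C_f m^α − K ≤ f(m) ≤ −C_f m^α + K for all m ≥ 0 (C_f, K > 0, α > 0). Let χ be a probability density on ℝ^N and m ∈ L^1(ℝ^N), m ≥ 0, ∫ m = M. Then ∫_{ℝ^N} F(m ⋆ χ)(x) dx ≥ −(C_f/(α+1)) ∫_{ℝ^N} m(x)^{α+1} dx − K M. -/
/-!
Since `f ≥ -C_f m^α - K` on `[0, ∞)`, integrating gives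
`F(s) ≥ -(C_f/(α+1)) s^(α+1) - K s` for `s ≥ 0`. Apply this at `s = (m ⋆ χ)(x)`. For each `x`,
`y ↦ χ(x - y)` is a probability density, so Jensen's inequality for the convex map `s ↦ s^(α+1)`
gives `(m ⋆ χ)^(α+1) ≤ m^(α+1) ⋆ χ` pointwise. Integrating over `x`, convolving with `χ`
preserves integrals, so `∫ m^(α+1) ⋆ χ = ∫ m^(α+1)` and `∫ m ⋆ χ = M`.
-/

open MeasureTheory ContinuousLinearMap
open scoped Convolution

theorem le_intervalIntegral_of_neg_rpow_sub_le {α C K s : ℝ} (hα : -1 < α) (hC : 0 ≤ C)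
    (hK : 0 ≤ K) (hs : 0 ≤ s) {f : ℝ → ℝ} (hf : ∀ t, 0 ≤ t → -C * t ^ α - K ≤ f t) :
    -(C / (α + 1)) * s ^ (α + 1) - K * s ≤ ∫ t in (0 : ℝ)..s, f t := by
  have hrpow : IntervalIntegrable (fun t : ℝ => t ^ α) volume 0 s :=
    intervalIntegral.intervalIntegrable_rpow' hα
  have hbound : IntervalIntegrable (fun t : ℝ => -C * t ^ α - K) volume 0 s :=
    (hrpow.const_mul _).sub intervalIntegrable_const
  have hprimitive :
      ∫ t in (0 : ℝ)..s, (-C * t ^ α - K) = -(C / (α + 1)) * s ^ (α + 1) - K * s := by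
    rw [intervalIntegral.integral_sub (hrpow.const_mul _) intervalIntegrable_const,
      intervalIntegral.integral_const_mul, integral_rpow (.inl hα),
      intervalIntegral.integral_const, Real.zero_rpow (by linarith), smul_eq_mul]
    ring
  by_cases hfi : IntervalIntegrable f volume 0 s
  · exact hprimitive ▸ intervalIntegral.integral_mono_on hs hbound hfi fun t ht => hf t ht.1
  · -- the integral of a non-integrable `f` is `0`, and the left side is nonpositive
    rw [intervalIntegral.integral_undef hfi]
    have : 0 < α + 1 := by linarith
    have : 0 ≤ C / (α + 1) * s ^ (α + 1) := by positivity
    linarith [mul_nonneg hK hs]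

theorem rpow_integral_mul_le_integral_rpow_mul {X : Type*} [MeasurableSpace X] {μ : Measure X}
    {p : ℝ} (hp : 1 ≤ p) {u w : X → ℝ} (hu : ∀ x, 0 ≤ u x) (hw : ∀ x, 0 ≤ w x)
    (hw_meas : AEMeasurable w μ) (hw1 : ∫ x, w x ∂μ = 1)
    (huw : Integrable (fun x => u x * w x) μ) (hupw : Integrable (fun x => u x ^ p * w x) μ) :
    (∫ x, u x * w x ∂μ) ^ p ≤ ∫ x, u x ^ p * w x ∂μ := by
  -- Jensen's inequality for the probability measure `w • μ`
  set ν := μ.withDensity fun x => ((w x).toNNReal : ENNReal)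
  have hd : AEMeasurable (fun x => (w x).toNNReal) μ := hw_meas.real_toNNReal
  have integral_ν : ∀ g : X → ℝ, ∫ x, g x ∂ν = ∫ x, g x * w x ∂μ := fun g => by
    simp only [ν, integral_withDensity_eq_integral_smul₀ hd, NNReal.smul_def, smul_eq_mul,
      Real.coe_toNNReal _ (hw _), mul_comm]
  have integrable_ν : ∀ g : X → ℝ, Integrable g ν ↔ Integrable (fun x => g x * w x) μ :=
    fun g => by
      simp only [ν, integrable_withDensity_iff_integrable_smul₀ hd, NNReal.smul_def, smul_eq_mul,
        Real.coe_toNNReal _ (hw _), mul_comm]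
  have : IsProbabilityMeasure ν := by
    refine ⟨?_⟩
    rw [withDensity_apply _ MeasurableSet.univ, Measure.restrict_univ]
    change ∫⁻ x, ENNReal.ofReal (w x) ∂μ = 1
    rw [← ofReal_integral_eq_lintegral_ofReal
      (Integrable.of_integral_ne_zero (by simp [hw1])) (.of_forall hw), hw1, ENNReal.ofReal_one]
  rw [← integral_ν, ← integral_ν]
  exact (convexOn_rpow hp).map_integral_le
    (continuous_id.rpow_const fun _ => .inr (by linarith)).continuousOn isClosed_Ici
    (.of_forall hu) ((integrable_ν u).2 huw) ((integrable_ν _).2 hupw)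

theorem rpow_convolution_le_convolution_rpow {G : Type*} [MeasurableSpace G] [AddGroup G]
    [MeasurableAdd G] [MeasurableNeg G] {μ : Measure G} [μ.IsNegInvariant] [μ.IsAddLeftInvariant]
    {p : ℝ} (hp : 1 ≤ p) {u χ : G → ℝ} (hu : ∀ x, 0 ≤ u x) (hχ : ∀ x, 0 ≤ χ x)
    (hχ_meas : AEMeasurable χ μ) (hχ1 : ∫ x, χ x ∂μ = 1) {x : G}
    (hux : ConvolutionExistsAt u χ x (mul ℝ ℝ) μ)
    (hupx : ConvolutionExistsAt (fun y => u y ^ p) χ x (mul ℝ ℝ) μ) :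
    (u ⋆[mul ℝ ℝ, μ] χ) x ^ p ≤ ((fun y => u y ^ p) ⋆[mul ℝ ℝ, μ] χ) x :=
  rpow_integral_mul_le_integral_rpow_mul hp hu (fun _ => hχ _)
    (hχ_meas.comp_quasiMeasurePreserving
      (Measure.measurePreserving_sub_left μ x).quasiMeasurePreserving)
    ((integral_sub_left_eq_self χ μ x).trans hχ1) hux hupx

theorem regularized_coupling_energy_lower_bound_general
    {N : ℕ} (α C_f K M : ℝ)
    (hα : 0 < α) (hCf : 0 < C_f) (hK : 0 < K)
    (f : ℝ → ℝ)
    (hf : ∀ s : ℝ, 0 ≤ s → -C_f * s ^ α - K ≤ f s ∧ f s ≤ -C_f * s ^ α + K)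
    (F : ℝ → ℝ) (hF : ∀ s, F s = ∫ t in (0:ℝ)..s, f t)
    (χ : EuclideanSpace ℝ (Fin N) → ℝ)
    (hχInt : Integrable χ) (hχ0 : ∀ x, 0 ≤ χ x) (hχ1 : ∫ x, χ x = 1)
    (m : EuclideanSpace ℝ (Fin N) → ℝ)
    (hmInt : Integrable m) (hm0 : ∀ x, 0 ≤ m x) (hmM : ∫ x, m x = M)
    (hmα : Integrable (fun x => m x ^ (α + 1)))
    (hFconv : Integrable (fun x => F (∫ y, m y * χ (x - y)))) :
    ∫ x, F (∫ y, m y * χ (x - y)) ≥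
      -(C_f / (α + 1)) * (∫ x, m x ^ (α + 1)) - K * M := by
  simp only [← convolution_mul] at hFconv ⊢
  set mp := fun y => m y ^ (α + 1)
  have hm_conv := hmInt.integrable_convolution (mul ℝ ℝ) hχInt
  have hmp_conv := hmα.integrable_convolution (mul ℝ ℝ) hχInt
  have hpointwise : ∀ᵐ x, -(C_f / (α + 1)) * (mp ⋆[mul ℝ ℝ] χ) x - K * (m ⋆[mul ℝ ℝ] χ) x ≤
      F ((m ⋆[mul ℝ ℝ] χ) x) := by
    filter_upwards [hmInt.ae_convolution_exists (mul ℝ ℝ) hχInt,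
      hmα.ae_convolution_exists (mul ℝ ℝ) hχInt] with x hux hupx
    have hjensen := rpow_convolution_le_convolution_rpow (by linarith) hm0 hχ0
      hχInt.aemeasurable hχ1 hux hupx
    have hconv0 : 0 ≤ (m ⋆[mul ℝ ℝ] χ) x := integral_nonneg fun y => mul_nonneg (hm0 y) (hχ0 _)
    have hc : 0 ≤ C_f / (α + 1) := by positivity
    calc -(C_f / (α + 1)) * (mp ⋆[mul ℝ ℝ] χ) x - K * (m ⋆[mul ℝ ℝ] χ) x
        ≤ -(C_f / (α + 1)) * (m ⋆[mul ℝ ℝ] χ) x ^ (α + 1) - K * (m ⋆[mul ℝ ℝ] χ) x := by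
          linarith [mul_le_mul_of_nonneg_left hjensen hc]
      _ ≤ F ((m ⋆[mul ℝ ℝ] χ) x) := hF _ ▸ le_intervalIntegral_of_neg_rpow_sub_le (by linarith)
          hCf.le hK.le hconv0 fun t ht => (hf t ht).1
  calc -(C_f / (α + 1)) * (∫ x, mp x) - K * M
      = ∫ x, -(C_f / (α + 1)) * (mp ⋆[mul ℝ ℝ] χ) x - K * (m ⋆[mul ℝ ℝ] χ) x := by
        rw [integral_sub (hmp_conv.const_mul _) (hm_conv.const_mul _), integral_const_mul,
          integral_const_mul, integral_convolution (mul ℝ ℝ) hmα hχInt,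
          integral_convolution (mul ℝ ℝ) hmInt hχInt, hmM, hχ1]
        simp
    _ ≤ ∫ x, F ((m ⋆[mul ℝ ℝ] χ) x) :=
        integral_mono_ae ((hmp_conv.const_mul _).sub (hm_conv.const_mul _)) hFconv hpointwise

theorem regularized_coupling_energy_lower_bound
    {N : ℕ} (hN : 1 ≤ N) (α C_f K M : ℝ)
    (hα : 0 < α) (hCf : 0 < C_f) (hK : 0 < K) (hM : 0 < M)
    (f : ℝ → ℝ)
    (hf : ∀ s : ℝ, 0 ≤ s → -C_f * s ^ α - K ≤ f s ∧ f s ≤ -C_f * s ^ α + K)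
    (F : ℝ → ℝ) (hF : ∀ s, F s = ∫ t in (0:ℝ)..s, f t)
    (χ : EuclideanSpace ℝ (Fin N) → ℝ)
    (hχInt : Integrable χ) (hχ0 : ∀ x, 0 ≤ χ x) (hχ1 : ∫ x, χ x = 1)
    (m : EuclideanSpace ℝ (Fin N) → ℝ)
    (hmInt : Integrable m) (hm0 : ∀ x, 0 ≤ m x) (hmM : ∫ x, m x = M)
    (hmα : Integrable (fun x => m x ^ (α + 1)))
    (hFconv : Integrable (fun x => F (∫ y, m y * χ (x - y)))) :
    ∫ x, F (∫ y, m y * χ (x - y)) ≥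
      -(C_f / (α + 1)) * (∫ x, m x ^ (α + 1)) - K * M :=
  regularized_coupling_energy_lower_bound_general α C_f K M hα hCf hK f hf F hF χ hχInt hχ0 hχ1 m
    hmInt hm0 hmM hmα hFconv
end

section
/- Let f_n → f almost everywhere on ℝ^N with ‖f_n‖_{L^p} ≤ C for all n and some p ∈ [1, ∞). Then lim_n (‖f_n‖_{L^p}^p − ‖f_n − f‖_{L^p}^p) = ‖f‖_{L^p}^p. -/
/-!
Write `f_n = (f_n - g) + g`. Convexity of `t ↦ t ^ p` gives, for every `ε > 0`, a constant `K`
with `|‖a + b‖ ^ p - ‖a‖ ^ p - ‖b‖ ^ p| ≤ ε ‖a‖ ^ p + K ‖b‖ ^ p`. Applied with `a = f_n - g` and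
`b = g`, the part of the integrand exceeding `ε ‖f_n - g‖ ^ p` is dominated by `K ‖g‖ ^ p` and
tends to `0` a.e., so its integral vanishes in the limit by dominated convergence; the remainder
is at most `ε` times `sup_n ‖f_n - g‖_p ^ p`, which is finite because `‖g‖_p ≤ C` by Fatou.
Letting `ε → 0` gives the claim.
-/

open MeasureTheory Filter Topology
open scoped ENNReal

namespace Real

variable {p : ℝ}

theorem add_rpow_le_rpow_div_add_rpow_div (hp : 1 ≤ p) {t s a b : ℝ} (ht : 0 ≤ t) (hs : 0 ≤ s)
    (ha : 0 < a) (hb : 0 < b) (hab : a + b = 1) :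
    (t + s) ^ p ≤ t ^ p / a ^ (p - 1) + s ^ p / b ^ (p - 1) := by
  have h := (convexOn_rpow hp).2 (Set.mem_Ici.2 (div_nonneg ht ha.le))
    (Set.mem_Ici.2 (div_nonneg hs hb.le)) ha.le hb.le hab
  simp only [smul_eq_mul, mul_div_cancel₀ _ ha.ne', mul_div_cancel₀ _ hb.ne'] at h
  refine h.trans_eq ?_
  rw [div_rpow ht ha.le, div_rpow hs hb.le, rpow_sub_one ha.ne', rpow_sub_one hb.ne']
  field_simp

theorem exists_add_rpow_le_one_add_mul_rpow_add_mul_rpow (hp : 1 ≤ p) {ε : ℝ} (hε : 0 < ε) :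
    ∃ K : ℝ, 0 ≤ K ∧ ∀ t s : ℝ, 0 ≤ t → 0 ≤ s → (t + s) ^ p ≤ (1 + ε) * t ^ p + K * s ^ p := by
  have hcont : Tendsto (fun a : ℝ => (a ^ (p - 1))⁻¹) (𝓝[<] 1) (𝓝 1) := by
    have := (continuousAt_rpow_const 1 (p - 1) (Or.inl one_ne_zero)).tendsto.inv₀ (by simp)
    simpa using this.mono_left nhdsWithin_le_nhds
  obtain ⟨a, ha, ⟨ha0, ha1⟩⟩ :=
    ((hcont.eventually (gt_mem_nhds (lt_add_of_pos_right 1 hε))).and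
      (Ioo_mem_nhdsLT zero_lt_one)).exists
  refine ⟨((1 - a) ^ (p - 1))⁻¹, by bound, fun t s ht hs => ?_⟩
  calc (t + s) ^ p ≤ t ^ p / a ^ (p - 1) + s ^ p / (1 - a) ^ (p - 1) :=
        add_rpow_le_rpow_div_add_rpow_div hp ht hs ha0 (by linarith) (by ring)
    _ ≤ (1 + ε) * t ^ p + ((1 - a) ^ (p - 1))⁻¹ * s ^ p := by
        rw [div_eq_inv_mul, div_eq_inv_mul]
        gcongr

end Real

section Pointwise

variable {E : Type*} [SeminormedAddCommGroup E] {p : ℝ}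

theorem exists_abs_norm_add_rpow_sub_rpow_sub_rpow_le (hp : 1 ≤ p) {ε : ℝ} (hε : 0 < ε) :
    ∃ K : ℝ, ∀ a b : E, |‖a + b‖ ^ p - ‖a‖ ^ p - ‖b‖ ^ p| ≤ ε * ‖a‖ ^ p + K * ‖b‖ ^ p := by
  obtain ⟨K, hK0, hK⟩ := Real.exists_add_rpow_le_one_add_mul_rpow_add_mul_rpow hp hε
  have hp0 : 0 ≤ p := by linarith
  refine ⟨K + 1, fun a b => abs_le.2 ⟨?_, ?_⟩⟩
  · have hb : 0 ≤ K * ‖b‖ ^ p := by positivity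
    have ha : 0 ≤ ε * ‖a‖ ^ p := by positivity
    rcases le_total ‖a‖ ‖a + b‖ with hab | hab
    · have := Real.rpow_le_rpow (norm_nonneg a) hab hp0
      linarith
    · have h1 : ‖a‖ ^ p ≤ (‖a + b‖ + ‖b‖) ^ p :=
        Real.rpow_le_rpow (norm_nonneg a) (by simpa using norm_sub_le (a + b) b) hp0
      have h2 : ε * ‖a + b‖ ^ p ≤ ε * ‖a‖ ^ p :=
        mul_le_mul_of_nonneg_left (Real.rpow_le_rpow (norm_nonneg _) hab hp0) hε.le
      linarith [hK ‖a + b‖ ‖b‖ (norm_nonneg _) (norm_nonneg _)]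
  · have h1 : ‖a + b‖ ^ p ≤ (‖a‖ + ‖b‖) ^ p :=
      Real.rpow_le_rpow (norm_nonneg _) (norm_add_le a b) hp0
    have hb : 0 ≤ ‖b‖ ^ p := by positivity
    linarith [hK ‖a‖ ‖b‖ (norm_nonneg _) (norm_nonneg _)]

end Pointwise

theorem tendsto_zero_of_forall_abs_le_add_mul {ι : Type*} {l : Filter ι} {x : ι → ℝ} (M : ℝ)
    (h : ∀ ε > 0, ∃ a : ι → ℝ, Tendsto a l (𝓝 0) ∧ ∀ i, |x i| ≤ a i + ε * M) :
    Tendsto x l (𝓝 0) := by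
  rw [Metric.tendsto_nhds]
  intro δ hδ
  have hεM : Tendsto (fun ε : ℝ => ε * M) (𝓝[>] 0) (𝓝 0) := by
    simpa using (tendsto_id.mul_const M).mono_left (nhdsWithin_le_nhds (a := (0 : ℝ)))
  obtain ⟨ε, hεδ, hε⟩ :=
    ((hεM.eventually (gt_mem_nhds (half_pos hδ))).and self_mem_nhdsWithin).exists
  obtain ⟨a, ha, hxa⟩ := h ε hε
  filter_upwards [ha.eventually (gt_mem_nhds (half_pos hδ))] with i hi
  rw [Real.dist_0_eq_abs]
  linarith [hxa i]

namespace MeasureTheory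

variable {α E : Type*} [MeasurableSpace α] {μ : Measure α} [NormedAddCommGroup E] {p : ℝ}

theorem tendsto_integral_zero_of_abs_le_mul_add {h v : ℕ → α → ℝ} {M : ℝ}
    (hh : ∀ n, AEStronglyMeasurable (h n) μ) (hv : ∀ n, Integrable (v n) μ)
    (hv_nonneg : ∀ n, 0 ≤ v n) (hvM : ∀ n, ∫ x, v n x ∂μ ≤ M)
    (hdom : ∀ ε > 0, ∃ G : α → ℝ, Integrable G μ ∧ ∀ n x, |h n x| ≤ ε * v n x + G x)
    (hlim : ∀ᵐ x ∂μ, Tendsto (fun n => h n x) atTop (𝓝 0)) :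
    Tendsto (fun n => ∫ x, h n x ∂μ) atTop (𝓝 0) := by
  refine tendsto_zero_of_forall_abs_le_add_mul M fun ε hε => ?_
  obtain ⟨G, hG, hhG⟩ := hdom ε hε
  set W : ℕ → α → ℝ := fun n x => max (|h n x| - ε * v n x) 0
  have hW_meas : ∀ n, AEStronglyMeasurable (W n) μ := fun n =>
    ((hh n).norm.sub ((hv n).1.const_mul ε)).sup aestronglyMeasurable_const
  have hW_le : ∀ n x, ‖W n x‖ ≤ |G x| := fun n x => by
    rw [Real.norm_of_nonneg (le_max_right _ _)]
    exact max_le (by linarith [hhG n x, le_abs_self (G x)]) (abs_nonneg _)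
  have hW_lim : ∀ᵐ x ∂μ, Tendsto (fun n => W n x) atTop (𝓝 0) := by
    filter_upwards [hlim] with x hx
    refine squeeze_zero (fun n => le_max_right _ _) (fun n => max_le ?_ (abs_nonneg _))
      (by simpa using hx.abs)
    linarith [mul_nonneg hε.le (hv_nonneg n x)]
  refine ⟨fun n => ∫ x, W n x ∂μ, ?_, fun n => ?_⟩
  · simpa using tendsto_integral_of_dominated_convergence _ hW_meas hG.abs
      (fun n => .of_forall (hW_le n)) hW_lim
  · have hW_int : Integrable (W n) μ := hG.abs.mono' (hW_meas n) (.of_forall (hW_le n))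
    calc |∫ x, h n x ∂μ| ≤ ∫ x, |h n x| ∂μ := abs_integral_le_integral_abs
      _ ≤ ∫ x, (W n x + ε * v n x) ∂μ :=
          integral_mono_of_nonneg (.of_forall fun x => abs_nonneg _)
            (hW_int.add ((hv n).const_mul ε))
            (.of_forall fun x => by linarith [le_max_left (|h n x| - ε * v n x) 0])
      _ = ∫ x, W n x ∂μ + ε * ∫ x, v n x ∂μ := by
          rw [integral_add hW_int ((hv n).const_mul ε), integral_const_mul]
      _ ≤ ∫ x, W n x ∂μ + ε * M := by gcongr; exact hvM n

theorem integral_norm_rpow_le_of_eLpNorm_le (hp : 0 < p) {u : α → E} {C : ℝ≥0∞} (hC : C ≠ ∞)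
    (hu : AEStronglyMeasurable u μ) (huC : eLpNorm u (ENNReal.ofReal p) μ ≤ C) :
    ∫ x, ‖u x‖ ^ p ∂μ ≤ C.toReal ^ p := by
  have hmem : MemLp u (ENNReal.ofReal p) μ := ⟨hu, huC.trans_lt hC.lt_top⟩
  rw [hmem.eLpNorm_eq_integral_rpow_norm (by simpa using hp) ENNReal.ofReal_ne_top,
    ENNReal.toReal_ofReal hp.le, ENNReal.ofReal_le_iff_le_toReal hC,
    Real.rpow_inv_le_iff_of_pos (integral_nonneg fun x => by positivity) ENNReal.toReal_nonneg hp]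
    at huC
  exact huC

theorem integrable_norm_rpow_of_eLpNorm_le (hp : 0 < p) {u : α → E} {C : ℝ≥0∞} (hC : C ≠ ∞)
    (hu : AEStronglyMeasurable u μ) (huC : eLpNorm u (ENNReal.ofReal p) μ ≤ C) :
    Integrable (fun x => ‖u x‖ ^ p) μ := by
  simpa [hp.le] using (MemLp.integrable_norm_rpow ⟨hu, huC.trans_lt hC.lt_top⟩
    (by simpa using hp) ENNReal.ofReal_ne_top (μ := μ))

theorem tendsto_integral_norm_rpow_sub_integral_norm_sub_rpow (hp : 1 ≤ p) {C : ℝ≥0∞}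
    (hC : C ≠ ∞) {f : ℕ → α → E} {g : α → E} (hf : ∀ n, AEStronglyMeasurable (f n) μ)
    (hfg : ∀ᵐ x ∂μ, Tendsto (fun n => f n x) atTop (𝓝 (g x)))
    (hfC : ∀ n, eLpNorm (f n) (ENNReal.ofReal p) μ ≤ C) :
    Tendsto (fun n => (∫ x, ‖f n x‖ ^ p ∂μ) - ∫ x, ‖f n x - g x‖ ^ p ∂μ) atTop
      (𝓝 (∫ x, ‖g x‖ ^ p ∂μ)) := by
  have hp0 : 0 < p := by linarith
  have hg : AEStronglyMeasurable g μ := aestronglyMeasurable_of_tendsto_ae atTop hf hfg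
  have hgC : eLpNorm g (ENNReal.ofReal p) μ ≤ C :=
    (Lp.eLpNorm_lim_le_liminf_eLpNorm hf g hfg).trans
      (liminf_le_of_frequently_le' (.of_forall hfC))
  have hfgC : ∀ n, eLpNorm (f n - g) (ENNReal.ofReal p) μ ≤ C + C := fun n =>
    (eLpNorm_sub_le (hf n) hg (by simpa using hp)).trans (add_le_add (hfC n) hgC)
  have hCC : C + C ≠ ∞ := ENNReal.add_ne_top.2 ⟨hC, hC⟩
  have hfi n := integrable_norm_rpow_of_eLpNorm_le hp0 hC (hf n) (hfC n)
  have hgi := integrable_norm_rpow_of_eLpNorm_le hp0 hC hg hgC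
  have hfgi : ∀ n, Integrable (fun x => ‖f n x - g x‖ ^ p) μ := fun n =>
    integrable_norm_rpow_of_eLpNorm_le hp0 hCC ((hf n).sub hg) (hfgC n)
  have hdefect : Tendsto (fun n => ∫ x, (‖f n x‖ ^ p - ‖f n x - g x‖ ^ p - ‖g x‖ ^ p) ∂μ)
      atTop (𝓝 0) := by
    refine tendsto_integral_zero_of_abs_le_mul_add (M := (C + C).toReal ^ p)
      (fun n => (((hfi n).sub (hfgi n)).sub hgi).1) hfgi (fun n x => by positivity)
      (fun n => integral_norm_rpow_le_of_eLpNorm_le hp0 hCC ((hf n).sub hg) (hfgC n))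
      (fun ε hε => ?_) ?_
    · obtain ⟨K, hK⟩ := exists_abs_norm_add_rpow_sub_rpow_sub_rpow_le (E := E) hp hε
      exact ⟨_, hgi.const_mul K, fun n x => by simpa using hK (f n x - g x) (g x)⟩
    · filter_upwards [hfg] with x hx
      have := ((hx.norm.rpow_const (.inr hp0.le)).sub
        ((hx.sub_const (g x)).norm.rpow_const (.inr hp0.le))).sub_const (‖g x‖ ^ p)
      simpa [Real.zero_rpow hp0.ne'] using this
  convert hdefect.add_const (∫ x, ‖g x‖ ^ p ∂μ) using 2 with n
  · rw [integral_sub (f := fun x => ‖f n x‖ ^ p - ‖f n x - g x‖ ^ p) ((hfi n).sub (hfgi n)) hgi,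
      integral_sub (hfi n) (hfgi n)]
    ring
  · simp

end MeasureTheory

theorem brezis_lieb_general
    {N : ℕ} (p C : ℝ) (hp : 1 ≤ p)
    (f : ℕ → EuclideanSpace ℝ (Fin N) → ℝ) (g : EuclideanSpace ℝ (Fin N) → ℝ)
    (hmeas : ∀ n, AEStronglyMeasurable (f n)
      (volume : Measure (EuclideanSpace ℝ (Fin N))))
    (hae : ∀ᵐ x ∂(volume : Measure (EuclideanSpace ℝ (Fin N))),
      Tendsto (fun n => f n x) atTop (nhds (g x)))
    (hbound : ∀ n, eLpNorm (f n) (ENNReal.ofReal p)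
      (volume : Measure (EuclideanSpace ℝ (Fin N))) ≤ ENNReal.ofReal C) :
    Tendsto (fun n => (∫ x, |f n x| ^ p) - ∫ x, |f n x - g x| ^ p)
      atTop (nhds (∫ x, |g x| ^ p)) := by
  simpa only [Real.norm_eq_abs] using
    tendsto_integral_norm_rpow_sub_integral_norm_sub_rpow hp ENNReal.ofReal_ne_top hmeas hae hbound

theorem brezis_lieb
    {N : ℕ} (hN : 1 ≤ N) (p C : ℝ) (hp : 1 ≤ p) (hC : 0 < C)
    (f : ℕ → EuclideanSpace ℝ (Fin N) → ℝ) (g : EuclideanSpace ℝ (Fin N) → ℝ)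
    (hmeas : ∀ n, AEStronglyMeasurable (f n)
      (volume : Measure (EuclideanSpace ℝ (Fin N))))
    (hae : ∀ᵐ x ∂(volume : Measure (EuclideanSpace ℝ (Fin N))),
      Tendsto (fun n => f n x) atTop (nhds (g x)))
    (hbound : ∀ n, eLpNorm (f n) (ENNReal.ofReal p)
      (volume : Measure (EuclideanSpace ℝ (Fin N))) ≤ ENNReal.ofReal C) :
    Tendsto (fun n => (∫ x, |f n x| ^ p) - ∫ x, |f n x - g x| ^ p)
      atTop (nhds (∫ x, |g x| ^ p)) :=
  brezis_lieb_general p C hp f g hmeas hae hbound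
end
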